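/- arXiv:2108.05911 — 2 statements merged into one kernel-verified Lean document; each statement's English description precedes it below -/
import Mathlib

section
/- Let G' = (V, E) be a finite directed graph and let v_1, …, v_{n+1} be distinct vertices of G'. Assume that for every i ∈ {1, …, n}, every directed path in G' from v_1 to v_{i+1} passes through v_i. Then for every directed path σ in G' starting at v_1, the following are equivalent: (a) σ contains the vertex v_{n+1}; (b) σ contains every vertex v_1, v_2, …, v_{n+1}, and for every i ∈ {1, …, n}, no occurrence of v_{i+1} in σ precedes the first occurrence of v_i in σ (i.e., σ visits v_1, v_2, …, v_{n+1} in this order). -/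
/-- A directed path in the graph with edge set `E`: a nonempty list of vertices
whose consecutive pairs are edges. -/
def IsPath {V : Type*} (E : Set (V × V)) (p : List V) : Prop :=
  p ≠ [] ∧ List.Chain' (fun u w => (u, w) ∈ E) p

/-- A directed path from `s` to `t`. -/
def IsPathFromTo {V : Type*} (E : Set (V × V)) (p : List V) (s t : V) : Prop :=
  IsPath E p ∧ p.head? = some s ∧ p.getLast? = some t

/-- The list `p` visits `v 0, v 1, …, v n` in order: every `v i` occurs on `p`, and
no occurrence of `v (i+1)` precedes the first occurrence of `v i`. -/
def VisitsInOrder {V : Type*} [DecidableEq V] {n : ℕ} (v : Fin (n + 1) → V)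
    (p : List V) : Prop :=
  (∀ i, v i ∈ p) ∧
  ∀ (i : Fin n) (k : Fin p.length),
    p.get k = v i.succ → p.idxOf (v i.castSucc) < (k : ℕ)

/-! Every prefix of a path starting at `s` is a path from `s` to its last vertex, so if
`a` dominates `b` (every path from `s` to `b` passes through `a`), the prefix ending at an
occurrence of `b` already contains `a`; hence the first occurrence of `a` comes earlier.
Applied to consecutive waypoints, this gives the order, and membership of all waypoints
follows from that of the last one by descending induction. -/

def Dominates {V : Type*} (E : Set (V × V)) (s a b : V) : Prop :=
  ∀ p : List V, IsPathFromTo E p s b → a ∈ p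

namespace List

variable {α : Type*} [DecidableEq α] {l : List α} {a : α}

theorem idxOf_lt_of_mem_take {m : ℕ} (h : a ∈ l.take m) : l.idxOf a < m :=
  calc l.idxOf a = (l.take m).idxOf a := by
        rw [← idxOf_append_of_mem (l₂ := l.drop m) h, take_append_drop]
    _ < (l.take m).length := idxOf_lt_length_of_mem h
    _ ≤ m := length_take_le _ _

theorem idxOf_lt_of_mem_take_succ {k : ℕ} (h : a ∈ l.take (k + 1)) (hk : k < l.length)
    (hne : l[k] ≠ a) : l.idxOf a < k := by
  have hle : l.idxOf a < k + 1 := idxOf_lt_of_mem_take h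
  have hk' : l.idxOf a ≠ k := by
    rintro heq
    have hget := idxOf_get (a := a) (l := l) (heq ▸ hk)
    simp only [get_eq_getElem, heq] at hget
    exact hne hget
  omega

end List

section Paths

variable {V : Type*} {E : Set (V × V)} {p : List V} {s : V}

theorem IsPath.isPathFromTo_take_succ (hp : IsPath E p) (hs : p.head? = some s) {k : ℕ}
    (hk : k < p.length) : IsPathFromTo E (p.take (k + 1)) s p[k] := by
  refine ⟨⟨?_, hp.2.prefix (List.take_prefix _ _)⟩, ?_, ?_⟩
  · simpa using hp.1
  · simp [List.head?_take, hs]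
  · simp [List.getLast?_eq_getElem?, hk]

theorem Dominates.idxOf_lt [DecidableEq V] {a b : V} (hdom : Dominates E s a b) (hab : a ≠ b)
    (hp : IsPath E p) (hs : p.head? = some s) {k : ℕ} (hk : k < p.length) (hb : p[k] = b) :
    p.idxOf a < k := by
  have hmem : a ∈ p.take (k + 1) := hdom _ (hb ▸ hp.isPathFromTo_take_succ hs hk)
  exact List.idxOf_lt_of_mem_take_succ hmem hk (hb ▸ hab.symm)

end Paths

theorem reach_iff_sequence_visit_general {V : Type*} [DecidableEq V]
    (E : Set (V × V)) (n : ℕ) (v : Fin (n + 1) → V) (hv : Function.Injective v)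
    (hpass : ∀ i : Fin n, ∀ p : List V,
      IsPathFromTo E p (v 0) (v i.succ) → v i.castSucc ∈ p)
    (σ : List V) (hσ : IsPath E σ) (hstart : σ.head? = some (v 0)) :
    v (Fin.last n) ∈ σ ↔ VisitsInOrder v σ := by
  have hbefore : ∀ (i : Fin n) (k : Fin σ.length),
      σ.get k = v i.succ → σ.idxOf (v i.castSucc) < k := fun i k hk =>
    Dominates.idxOf_lt (hpass i) (hv.ne Fin.castSucc_lt_succ.ne) hσ hstart k.isLt hk
  refine ⟨fun hlast => ⟨fun i => ?_, hbefore⟩, fun h => h.1 _⟩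
  induction i using Fin.reverseInduction with
  | last => exact hlast
  | cast i ih =>
    obtain ⟨k, hk⟩ := List.mem_iff_get.mp ih
    exact List.idxOf_lt_length_iff.mp ((hbefore i k hk).trans k.isLt)

/-- If every directed path from `v 0` to `v (i+1)` passes through `v i`
(for all `i`), then a directed path `σ` starting at `v 0` contains `v n` (the last
waypoint) iff it contains all the waypoints and visits them in order. -/
theorem reach_iff_sequence_visit {V : Type*} [Fintype V] [DecidableEq V]
    (E : Set (V × V)) (n : ℕ) (v : Fin (n + 1) → V) (hv : Function.Injective v)
    (hpass : ∀ i : Fin n, ∀ p : List V,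
      IsPathFromTo E p (v 0) (v i.succ) → v i.castSucc ∈ p)
    (σ : List V) (hσ : IsPath E σ) (hstart : σ.head? = some (v 0)) :
    v (Fin.last n) ∈ σ ↔ VisitsInOrder v σ :=
  reach_iff_sequence_visit_general E n v hv hpass σ hσ hstart
end

section
/- Let G = (V, E) be a finite directed graph and let v_1, …, v_{n+1} be distinct vertices. Suppose G contains a directed path Γ from v_1 to v_{n+1} that visits each of its vertices at most once and visits v_1, v_2, …, v_{n+1} in this order. Then there exists a set of edges C ⊆ E such that in the graph G' = (V, E ∖ C), all distances d_{G'}(v_i, v_{n+1}) are finite and d_{G'}(v_1, v_{n+1}) > d_{G'}(v_2, v_{n+1}) > ⋯ > d_{G'}(v_n, v_{n+1}) > d_{G'}(v_{n+1}, v_{n+1}) = 0. -/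
/-- The distance from `u` to `w` in the graph with edge set `E`: the length of a
shortest directed path from `u` to `w` (`⊤` if none exists). A path `q_0 … q_k`
has length `k`, i.e. list length `k + 1`. -/
noncomputable def graphDist {V : Type*} (E : Set (V × V)) (u w : V) : ℕ∞ :=
  sInf {k : ℕ∞ | ∃ p : List V, IsPathFromTo E p u w ∧ (p.length : ℕ∞) = k + 1}

/-!
Cut every edge that is not an edge of `Γ`. In the remaining graph each edge moves exactly one
position forward along the simple path `Γ`, so position on `Γ` is a potential that grows by at
most one per step: the suffix of `Γ` is a shortest path, and the distance of a vertex to the end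
of `Γ` is the number of positions left after it. Since the waypoints occur on `Γ` in order, these
numbers strictly decrease along the waypoints and vanish at the last one.
-/

def pathEdges {V : Type*} (p : List V) : Set (V × V) :=
  {e | ∃ (j : ℕ) (h : j + 1 < p.length), e = (p[j], p[j + 1])}

section Paths

variable {V : Type*}

lemma isChain_pathEdges (p : List V) : List.IsChain (fun u w => (u, w) ∈ pathEdges p) p :=
  List.isChain_iff_getElem.2 fun j hj => ⟨j, hj, rfl⟩

lemma pathEdges_subset {E : Set (V × V)} {p : List V}
    (hp : List.IsChain (fun u w => (u, w) ∈ E) p) : pathEdges p ⊆ E := by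
  rintro _ ⟨j, hj, rfl⟩
  exact List.isChain_iff_getElem.1 hp j hj

lemma isPathFromTo_drop_idxOf [DecidableEq V] {E : Set (V × V)} {p : List V} {u w : V}
    (hp : IsPath E p) (hw : p.getLast? = some w) (hu : u ∈ p) :
    IsPathFromTo E (p.drop (p.idxOf u)) u w := by
  have hlt := List.idxOf_lt_length_iff.2 hu
  have hne : p.drop (p.idxOf u) ≠ [] := by simpa using hlt
  refine ⟨⟨hne, hp.2.drop _⟩, ?_, ?_⟩
  · rw [List.head?_drop, List.getElem?_idxOf hu]
  · rw [List.getLast?_drop, if_neg (by omega), hw]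

lemma List.IsChain.potential_getLast_le {r : V → V → Prop} (f : V → ℕ)
    (hf : ∀ a b, r a b → f b ≤ f a + 1) :
    ∀ (q : List V), List.IsChain r q → ∀ hq : q ≠ [],
      f (q.getLast hq) ≤ f (q.head hq) + (q.length - 1)
  | [_], _, _ => by simp
  | a :: b :: q, hq, _ => by
    rw [List.isChain_cons_cons] at hq
    have ih := potential_getLast_le f hf (b :: q) hq.2 (List.cons_ne_nil _ _)
    have hab := hf a b hq.1
    simp only [List.getLast_cons_cons, List.head_cons, List.length_cons] at ih ⊢
    omega

lemma List.Nodup.idxOf_of_getLast?_eq [DecidableEq V] {p : List V} {w : V} (hp : p.Nodup)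
    (hw : p.getLast? = some w) : p.idxOf w = p.length - 1 := by
  rw [List.getLast?_eq_getElem?, List.getElem?_eq_some_iff] at hw
  obtain ⟨h, rfl⟩ := hw
  exact hp.idxOf_getElem _ h

lemma VisitsInOrder.idxOf_lt [DecidableEq V] {n : ℕ} {v : Fin (n + 1) → V} {p : List V}
    (h : VisitsInOrder v p) (i : Fin n) : p.idxOf (v i.castSucc) < p.idxOf (v i.succ) := by
  have hlt := List.idxOf_lt_length_iff.2 (h.1 i.succ)
  exact h.2 i ⟨_, hlt⟩ (List.getElem_idxOf hlt)

end Paths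

section Distance

variable {V : Type*} {E : Set (V × V)} {u w : V}

lemma graphDist_le {p : List V} (hp : IsPathFromTo E p u w) :
    graphDist E u w ≤ (p.length - 1 : ℕ) := by
  refine sInf_le ⟨p, hp, ?_⟩
  have : p.length ≠ 0 := by simpa using hp.1.1
  norm_cast
  omega

lemma le_graphDist_of_potential (f : V → ℕ) (hf : ∀ a b, (a, b) ∈ E → f b ≤ f a + 1) :
    ((f w - f u : ℕ) : ℕ∞) ≤ graphDist E u w := by
  refine le_sInf ?_
  rintro k ⟨q, ⟨⟨hq, hchain⟩, hhead, hlast⟩, hlen⟩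
  have hk : k ≠ ⊤ := by rintro rfl; simp at hlen
  lift k to ℕ using hk
  have hqk : q.length = k + 1 := by exact_mod_cast hlen
  have hbound := List.IsChain.potential_getLast_le f hf q hchain hq
  rw [List.head?_eq_some_head hq, Option.some_inj] at hhead
  rw [List.getLast?_eq_some_getLast hq, Option.some_inj] at hlast
  rw [hhead, hlast] at hbound
  norm_cast
  omega

lemma graphDist_pathEdges [DecidableEq V] {p : List V} (hp : p.Nodup) (hu : u ∈ p)
    (hw : p.getLast? = some w) :
    graphDist (pathEdges p) u w = (p.length - 1 - p.idxOf u : ℕ) := by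
  have hne : p ≠ [] := List.ne_nil_of_mem hu
  apply le_antisymm
  · have := graphDist_le (isPathFromTo_drop_idxOf ⟨hne, isChain_pathEdges p⟩ hw hu)
    rwa [List.length_drop, Nat.sub_right_comm] at this
  · rw [← hp.idxOf_of_getLast?_eq hw]
    refine le_graphDist_of_potential p.idxOf ?_
    rintro _ _ ⟨j, hj, ⟨⟩⟩
    rw [hp.idxOf_getElem, hp.idxOf_getElem]

end Distance

theorem exists_cut_strict_distance_chain_general {V : Type*} [DecidableEq V]
    (E : Set (V × V)) (n : ℕ) (v : Fin (n + 1) → V)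
    (Γ : List V) (hΓ : IsPathFromTo E Γ (v 0) (v (Fin.last n)))
    (hnodup : Γ.Nodup) (horder : VisitsInOrder v Γ) :
    ∃ C : Set (V × V), C ⊆ E ∧
      (∀ i : Fin (n + 1), graphDist (E \ C) (v i) (v (Fin.last n)) ≠ ⊤) ∧
      (∀ i : Fin n,
        graphDist (E \ C) (v i.succ) (v (Fin.last n)) <
          graphDist (E \ C) (v i.castSucc) (v (Fin.last n))) ∧
      graphDist (E \ C) (v (Fin.last n)) (v (Fin.last n)) = 0 := by
  obtain ⟨⟨-, hchain⟩, -, hlast⟩ := hΓ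
  refine ⟨E \ pathEdges Γ, Set.sdiff_subset, ?_⟩
  rw [Set.sdiff_sdiff_cancel_left (pathEdges_subset hchain)]
  have hdist i := graphDist_pathEdges hnodup (horder.1 i) hlast
  refine ⟨fun i => by simp [hdist], fun i => ?_, ?_⟩
  · rw [hdist, hdist, Nat.cast_lt]
    have := horder.idxOf_lt i
    have := List.idxOf_lt_length_iff.2 (horder.1 i.succ)
    omega
  · rw [hdist, hnodup.idxOf_of_getLast?_eq hlast, Nat.sub_self, Nat.cast_zero]

/-- If `G` contains a vertex-simple directed path from `v 0` to
`v n` (i.e. `v_1` to `v_{n+1}`) visiting the distinct waypoints in order, then some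
set of edges `C ⊆ E` can be removed so that in `G' = (V, E \ C)` the distances to the
final waypoint are finite and strictly decreasing along the waypoint sequence,
ending at distance `0`. -/
theorem exists_cut_strict_distance_chain {V : Type*} [Fintype V] [DecidableEq V]
    (E : Set (V × V)) (n : ℕ) (v : Fin (n + 1) → V) (hv : Function.Injective v)
    (Γ : List V) (hΓ : IsPathFromTo E Γ (v 0) (v (Fin.last n)))
    (hnodup : Γ.Nodup) (horder : VisitsInOrder v Γ) :
    ∃ C : Set (V × V), C ⊆ E ∧
      (∀ i : Fin (n + 1), graphDist (E \ C) (v i) (v (Fin.last n)) ≠ ⊤) ∧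
      (∀ i : Fin n,
        graphDist (E \ C) (v i.succ) (v (Fin.last n)) <
          graphDist (E \ C) (v i.castSucc) (v (Fin.last n))) ∧
      graphDist (E \ C) (v (Fin.last n)) (v (Fin.last n)) = 0 :=
  exists_cut_strict_distance_chain_general E n v Γ hΓ hnodup horder
end
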